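/- arXiv:2203.09774 — 10 statements merged into one kernel-verified Lean document; each statement's English description precedes it below -/
import Mathlib

section
/- Let a, b : ℤ → ℂ be absolutely summable sequences and let c be their convolution, c(k) := Σ_{r∈ℤ} a(k−r)·b(r). Then for all i, j ∈ ℕ (indices ≥ 0), Σ_{r∈ℕ} a(i−r)·b(r−j) = c(i−j) − Σ_{k≥1} a(i+k)·b(−k−j). This is the entrywise form of the semi-infinite Toeplitz identity T_s(a)·T_s(b) = T_s(c) − H(a⁺)·H(b⁻). -/
/-- Entrywise form of the semi-infinite Toeplitz identity
`T_s(a)·T_s(b) = T_s(c) − H(a⁺)·H(b⁻)`. -/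
theorem semiInfinite_toeplitz_product
    (a b c : ℤ → ℂ)
    (ha : Summable fun k => ‖a k‖) (hb : Summable fun k => ‖b k‖)
    (hc : ∀ k : ℤ, c k = ∑' r : ℤ, a (k - r) * b r) :
    ∀ i j : ℕ,
      ∑' r : ℕ, a ((i : ℤ) - (r : ℤ)) * b ((r : ℤ) - (j : ℤ))
        = c ((i : ℤ) - (j : ℤ))
          - ∑' k : ℕ, a ((i : ℤ) + (k : ℤ) + 1) * b (-(k : ℤ) - 1 - (j : ℤ)) := by
  intro i j
  set f : ℤ → ℂ := fun r => a ((i : ℤ) - r) * b (r - (j : ℤ)) with hf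
  -- boundedness of b
  obtain ⟨C, hC⟩ : ∃ C, ∀ r : ℤ, ‖b (r - (j : ℤ))‖ ≤ C := by
    refine ⟨∑' k, ‖b k‖, fun r => ?_⟩
    exact Summable.le_tsum hb _ (fun _ _ => norm_nonneg _)
  have hinj : Function.Injective (fun r : ℤ => (i : ℤ) - r) := fun m n h => by dsimp only at h; omega
  have hsf : Summable f := by
    apply Summable.of_norm
    refine Summable.of_nonneg_of_le (fun r => norm_nonneg _)
      (fun r => ?_) ((ha.comp_injective hinj).mul_right C)
    simp only [Function.comp_apply, f, norm_mul]
    exact mul_le_mul_of_nonneg_left (hC r) (norm_nonneg _)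
  have hkey : ∑' r : ℤ, f r = c ((i : ℤ) - (j : ℤ)) := by
    rw [hc]
    rw [← (Equiv.subRight (j : ℤ)).tsum_eq (fun r => a (((i:ℤ) - (j:ℤ)) - r) * b r)]
    apply tsum_congr; intro r
    simp only [Equiv.subRight_apply, f]
    congr 2; ring
  have hpos : Summable fun n : ℕ => f n := hsf.comp_injective Nat.cast_injective
  have hneg : Summable fun n : ℕ => f (-(n + 1)) :=
    hsf.comp_injective (fun m n h => by simp only [neg_inj, add_left_inj, Nat.cast_inj] at h; exact h)
  have hsplit := tsum_of_nat_of_neg_add_one hpos hneg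
  rw [hkey] at hsplit
  have h1 : (∑' n : ℕ, f (-(n+1)))
      = ∑' k : ℕ, a ((i : ℤ) + (k : ℤ) + 1) * b (-(k : ℤ) - 1 - (j : ℤ)) := by
    apply tsum_congr; intro k
    simp only [f]
    ring_nf
  rw [h1] at hsplit
  have : ∑' r : ℕ, a ((i : ℤ) - (r : ℤ)) * b ((r : ℤ) - (j : ℤ)) = ∑' n : ℕ, f n := rfl
  rw [this]
  rw [hsplit]; ring
end

section
/- Let a, b : ℤ → ℂ be absolutely summable sequences and let c be their convolution, c(k) := Σ_{r∈ℤ} a(k−r)·b(r). Then for every m ∈ ℕ and all integers i, j with |i| ≤ m and |j| ≤ m, Σ_{r=−m}^{m} a(i−r)·b(r−j) = c(i−j) − Σ_{r>m} a(i−r)·b(r−j) − Σ_{r<−m} a(i−r)·b(r−j). This is the entrywise form of the finite-section identity T_m(a)·T_m(b) = T_m(c) − H_{(m,∞)}(a⁺)H_{(∞,m)}(b⁻) − J_m H_{(m,∞)}(a⁻)H_{(∞,m)}(b⁺) J_m for the (2m+1)×(2m+1) truncated Toeplitz matrices. -/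
open Set

theorem summable_mul_of_summable_norm_diag {ι R : Type*} [NormedRing R] [CompleteSpace R]
    {f g : ι → R} (hf : Summable fun x => ‖f x‖) (hg : Summable fun x => ‖g x‖) :
    Summable fun x => f x * g x :=
  (summable_mul_of_summable_norm hf hg).comp_injective (i := fun x => (x, x))
    fun _ _ h => congrArg Prod.fst h

theorem Summable.tsum_eq_sum_Icc_add_tsum_Ioi_add_tsum_Iio {α E : Type*} [LinearOrder α]
    [LocallyFiniteOrder α] [AddCommGroup E] [UniformSpace E] [IsUniformAddGroup E]
    [CompleteSpace E] [T2Space E] {f : α → E} (hf : Summable f) {l u : α} (hlu : l ≤ u) :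
    ∑' x, f x =
      ∑ x ∈ Finset.Icc l u, f x + ∑' x : {x // u < x}, f x + ∑' x : {x // x < l}, f x := by
  have hpartition : Iio l ∪ (Icc l u ∪ Ioi u) = univ := by
    rw [Icc_union_Ioi_eq_Ici hlu, Iio_union_Ici]
  rw [← tsum_univ, ← hpartition,
    Summable.tsum_union_disjoint (f := f) ((Iio_disjoint_Ici le_rfl).mono_right
      (Icc_union_Ioi_eq_Ici hlu).le) (hf.subtype _) (hf.subtype _),
    Summable.tsum_union_disjoint (f := f)
      ((Iic_disjoint_Ioi le_rfl).mono_left Icc_subset_Iic_self) (hf.subtype _) (hf.subtype _),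
    ← Finset.coe_Icc, Finset.tsum_subtype']
  exact add_comm _ _

theorem tsum_comp_sub_mul_comp_sub {G R : Type*} [AddCommGroup G] [Mul R] [AddCommMonoid R]
    [TopologicalSpace R] (a b : G → R) (i j : G) :
    ∑' r, a (i - r) * b (r - j) = ∑' r, a (i - j - r) * b r := by
  rw [← (Equiv.subRight j).tsum_eq fun r => a (i - j - r) * b r]
  simp only [Equiv.subRight_apply, sub_sub_sub_cancel_right]

/-- Entrywise form of the finite-section identity
`T_m(a)·T_m(b) = T_m(c) − H_{(m,∞)}(a⁺)H_{(∞,m)}(b⁻) − J_m H_{(m,∞)}(a⁻)H_{(∞,m)}(b⁺) J_m`. -/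
theorem truncated_toeplitz_product
    (a b c : ℤ → ℂ)
    (ha : Summable fun k => ‖a k‖) (hb : Summable fun k => ‖b k‖)
    (hc : ∀ k : ℤ, c k = ∑' r : ℤ, a (k - r) * b r) :
    ∀ (m : ℕ) (i j : ℤ), |i| ≤ (m : ℤ) → |j| ≤ (m : ℤ) →
      ∑ r ∈ Finset.Icc (-(m : ℤ)) (m : ℤ), a (i - r) * b (r - j)
        = c (i - j)
          - (∑' r : {r : ℤ // (m : ℤ) < r}, a (i - (r : ℤ)) * b ((r : ℤ) - j))
          - ∑' r : {r : ℤ // (r : ℤ) < -(m : ℤ)}, a (i - (r : ℤ)) * b ((r : ℤ) - j) := by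
  intro m i j _ _
  have hsummable : Summable fun r => a (i - r) * b (r - j) :=
    summable_mul_of_summable_norm_diag (ha.comp_injective sub_right_injective)
      (hb.comp_injective sub_left_injective)
  rw [hc, ← tsum_comp_sub_mul_comp_sub,
    hsummable.tsum_eq_sum_Icc_add_tsum_Ioi_add_tsum_Iio (neg_le_self m.cast_nonneg)]
  abel
end

section
/- Let T > 0 and let f : AddCircle T → ℂ be essentially bounded, with Fourier coefficients a(k) := fourierCoeff f k. Then the semi-infinite Hankel matrix H(a⁺) with entries H(a⁺)_{i,k} := a(i+k+1) for i, k ∈ ℕ satisfies ‖H(a⁺)‖ ≤ ‖f‖_∞ as an operator on ℓ²(ℕ): for every square-summable x : ℕ → ℂ, Σ_{i∈ℕ} |Σ_{k∈ℕ} a(i+k+1)·x(k)|² ≤ ‖f‖_∞² · Σ_{k∈ℕ} |x(k)|². -/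
/-! A Hankel operator is a compression of a multiplication operator. Put
`u := ∑ₖ x(k) e_{-(k+1)} ∈ L²`, so that `‖u‖₂ = ‖x‖₂`. The `i`-th Fourier coefficient of `f u`
is `∑ₖ a(i + k + 1) x(k)`, hence for `i ≥ 0` these are the entries of `H(a⁺) x`, and by Parseval
and Hölder `∑_{i ≥ 0} |(f u)^(i)|² ≤ ‖f u‖₂² ≤ ‖f‖²_∞ ‖u‖₂²`. -/

open MeasureTheory AddCircle Filter
open scoped ComplexConjugate InnerProductSpace

section Orthonormal

variable {𝕜 E ι : Type*} [RCLike 𝕜] [NormedAddCommGroup E] [InnerProductSpace 𝕜 E]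
  [CompleteSpace E] {v : ι → E} {c : ι → 𝕜}

theorem Orthonormal.summable_smul_of_summable_norm_sq (hv : Orthonormal 𝕜 v)
    (hc : Summable fun i => ‖c i‖ ^ 2) : Summable fun i => c i • v i := by
  simpa using (hv.orthogonalFamily.summable_iff_norm_sq_summable c).2 hc

theorem Orthonormal.norm_tsum_smul_sq (hv : Orthonormal 𝕜 v)
    (hc : Summable fun i => ‖c i‖ ^ 2) : ‖∑' i, c i • v i‖ ^ 2 = ∑' i, ‖c i‖ ^ 2 := by
  have hfin : ∀ s : Finset ι, ‖∑ i ∈ s, c i • v i‖ ^ 2 = ∑ i ∈ s, ‖c i‖ ^ 2 := by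
    simpa using hv.orthogonalFamily.norm_sum c
  refine tendsto_nhds_unique ?_ hc.hasSum
  simp_rw [← hfin]
  exact (hv.summable_smul_of_summable_norm_sq hc).hasSum.norm.pow 2

end Orthonormal

theorem MeasureTheory.Lp.toReal_eLpNorm_mul_le {α 𝕜 : Type*} [MeasurableSpace α]
    {μ : Measure α} [NormedRing 𝕜] {p : ENNReal} {f : α → 𝕜} (hf : MemLp f ⊤ μ) (v : Lp 𝕜 p μ) :
    (eLpNorm (f * ⇑v) p μ).toReal ≤ (eLpNorm f ⊤ μ).toReal * ‖v‖ := by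
  rw [Lp.norm_def, ← ENNReal.toReal_mul]
  exact ENNReal.toReal_mono (ENNReal.mul_ne_top hf.2.ne (Lp.memLp v).2.ne)
    (eLpNorm_smul_le_eLpNorm_top_mul_eLpNorm p (Lp.aestronglyMeasurable v) f)

section Fourier

variable {T : ℝ} [Fact (0 < T)]

theorem hasSum_sq_fourierCoeff_of_memLp {g : AddCircle T → ℂ} (hg : MemLp g 2 haarAddCircle) :
    HasSum (fun n => ‖fourierCoeff g n‖ ^ 2) ((eLpNorm g 2 haarAddCircle).toReal ^ 2) := by
  rw [← Lp.norm_toLp g hg, ← fourierCoeff_congr_ae hg.coeFn_toLp]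
  simp_rw [← fourierBasis_repr]
  rw [← fourierBasis.repr.norm_map]
  exact_mod_cast lp.hasSum_norm (by norm_num) (fourierBasis.repr (hg.toLp g))

theorem fourierCoeff_mul_fourier (f : AddCircle T → ℂ) (m n : ℤ) :
    fourierCoeff (f * ⇑(fourier m)) n = fourierCoeff f (n - m) := by
  unfold fourierCoeff
  congr 1 with t
  rw [neg_sub, sub_eq_add_neg, fourier_add, Pi.mul_apply, smul_eq_mul, smul_eq_mul]
  ring

theorem exists_fourierCoeff_mul_eq_inner {f : AddCircle T → ℂ} (hf : MemLp f ⊤ haarAddCircle)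
    (n : ℤ) : ∃ W : Lp ℂ 2 (@haarAddCircle T _), ∀ v : Lp ℂ 2 haarAddCircle,
      fourierCoeff (f * ⇑v) n = ⟪W, v⟫_ℂ := by
  have hW : MemLp (fun t => conj (f t) * fourier n t) 2 haarAddCircle := by
    refine MemLp.mono_exponent ?_ le_top
    refine hf.of_le ((Complex.continuous_conj.comp_aestronglyMeasurable hf.1).mul
      (map_continuous _).aestronglyMeasurable) (Eventually.of_forall fun t => ?_)
    rw [norm_mul, RCLike.norm_conj, fourier_apply, Circle.norm_coe, mul_one]
  refine ⟨hW.toLp _, fun v => ?_⟩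
  rw [L2.inner_def]
  refine integral_congr_ae ?_
  filter_upwards [hW.coeFn_toLp] with t ht
  rw [ht, Pi.mul_apply, RCLike.inner_apply, fourier_neg, smul_eq_mul, map_mul, Complex.conj_conj]
  ring

theorem hasSum_fourierCoeff_mul {ι : Type*} {f : AddCircle T → ℂ} (hf : MemLp f ⊤ haarAddCircle)
    {c : ι → ℂ} {m : ι → ℤ} {v : Lp ℂ 2 (@haarAddCircle T _)}
    (hv : HasSum (fun j => c j • fourierLp 2 (m j)) v) (n : ℤ) :
    HasSum (fun j => fourierCoeff f (n - m j) * c j) (fourierCoeff (f * ⇑v) n) := by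
  obtain ⟨W, hW⟩ := exists_fourierCoeff_mul_eq_inner hf n
  rw [hW]
  refine (hv.mapL (innerSL ℂ W)).congr_fun fun j => ?_
  rw [innerSL_apply_apply, inner_smul_right, ← hW, ← fourierCoeff_mul_fourier, mul_comm]
  congr 1
  refine congrFun (fourierCoeff_congr_ae ?_) n
  filter_upwards [coeFn_fourierLp 2 (m j)] with t ht
  rw [Pi.mul_apply, Pi.mul_apply, ht]

end Fourier

/-- The semi-infinite Hankel matrix `H(a⁺)`, with entries `a(i+k+1)` for `i, k ∈ ℕ` built from the
Fourier coefficients of an essentially bounded `f`, satisfies `‖H(a⁺)‖ ≤ ‖f‖_∞` on `ℓ²(ℕ)`. -/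
theorem hankel_opNorm_le
    (T : ℝ) [hT : Fact (0 < T)] (f : AddCircle T → ℂ)
    (hf : MemLp f ⊤ AddCircle.haarAddCircle) :
    ∀ x : ℕ → ℂ, Summable (fun k => ‖x k‖ ^ 2) →
      ∑' i : ℕ, ‖∑' k : ℕ, fourierCoeff f ((i : ℤ) + (k : ℤ) + 1) * x k‖ ^ 2
        ≤ (eLpNorm f ⊤ AddCircle.haarAddCircle).toReal ^ 2 * ∑' k : ℕ, ‖x k‖ ^ 2 := by
  intro x hx
  have hv : Orthonormal ℂ fun k : ℕ => fourierLp (T := T) 2 (-((k : ℤ) + 1)) :=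
    orthonormal_fourier.comp _ fun a b h => by simpa using h
  obtain ⟨u, hu⟩ := hv.summable_smul_of_summable_norm_sq hx
  have hfu : MemLp (f * ⇑u) 2 haarAddCircle := (Lp.memLp u).mul hf
  have hParseval := hasSum_sq_fourierCoeff_of_memLp hfu
  have hrow (i : ℕ) : ∑' k : ℕ, fourierCoeff f ((i : ℤ) + (k : ℤ) + 1) * x k
      = fourierCoeff (f * ⇑u) i := by
    rw [← (hasSum_fourierCoeff_mul hf hu i).tsum_eq]
    simp only [sub_neg_eq_add, add_assoc]
  calc ∑' i : ℕ, ‖∑' k : ℕ, fourierCoeff f ((i : ℤ) + (k : ℤ) + 1) * x k‖ ^ 2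
      = ∑' i : ℕ, ‖fourierCoeff (f * ⇑u) i‖ ^ 2 := by simp_rw [hrow]
    _ ≤ ∑' n : ℤ, ‖fourierCoeff (f * ⇑u) n‖ ^ 2 :=
        tsum_comp_le_tsum_of_inj hParseval.summable (fun _ => by positivity) Nat.cast_injective
    _ ≤ ((eLpNorm f ⊤ haarAddCircle).toReal * ‖u‖) ^ 2 := by
        rw [hParseval.tsum_eq]
        gcongr
        exact Lp.toReal_eLpNorm_mul_le hf u
    _ = (eLpNorm f ⊤ haarAddCircle).toReal ^ 2 * ∑' k : ℕ, ‖x k‖ ^ 2 := by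
        rw [mul_pow, ← hu.tsum_eq, hv.norm_tsum_smul_sq hx]
end

section
/- Let μ, λ ∈ ℂ with exp(λT) = μ, let φ ∈ ℂⁿ, and define v : ℝ → ℂⁿ by v(t) := exp(−λt)·(Φ(t)·φ). Then v(0) = φ, v satisfies the Carathéodory initial value problem v′(t) = (A(t) − λ·1)·v(t) for all t, and v is T-periodic (v(t+T) = v(t) for all t) if and only if Φ(T)·φ = μ·φ, i.e. if and only if (μ, φ) is an eigenpair of the monodromy matrix Φ(T). -/
/-! Differentiating `exp(-λt)·Φ(t)φ` by the product rule gives the ODE. Taking `t = 0` in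
`v(T) = v(0)` gives `exp(-λT)·Φ(T)φ = φ`, the eigen-equation. Conversely, `t ↦ Φ(t + T)` and
`t ↦ Φ(t)Φ(T)` solve the same linear equation (by periodicity of `A`) with the same value at `0`,
so they agree; hence `v(t + T) = exp(-λ(t+T))·Φ(t)(μφ) = v(t)`. -/

attribute [local instance] Matrix.normedAddCommGroup Matrix.normedSpace

open Matrix

open Set in
theorem ODE_solution_unique_of_continuous_clm {𝕜 E : Type*} [NontriviallyNormedField 𝕜]
    [NormedAddCommGroup E] [NormedSpace 𝕜 E] [NormedSpace ℝ E]
    {L : ℝ → E →L[𝕜] E} (hL : Continuous L) {f g : ℝ → E}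
    (hf : ∀ t, HasDerivAt f (L t (f t)) t) (hg : ∀ t, HasDerivAt g (L t (g t)) t)
    {t₀ : ℝ} (heq : f t₀ = g t₀) : f = g := by
  funext t
  obtain ⟨K, hK⟩ := isCompact_Icc.exists_bound_of_continuousOn
    (hL.continuousOn (s := Icc (min t t₀ - 1) (max t t₀ + 1)))
  have hLip : ∀ s ∈ Ioo (min t t₀ - 1) (max t t₀ + 1),
      LipschitzOnWith K.toNNReal (L s) univ := fun s hs =>
    ((L s).lipschitz.weaken (by
      rw [← NNReal.coe_le_coe, coe_nnnorm]
      exact (hK s (Ioo_subset_Icc_self hs)).trans K.le_coe_toNNReal)).lipschitzOnWith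
  exact ODE_solution_unique_of_mem_Ioo hLip ⟨by grind, by grind⟩
    (fun s _ => ⟨hf s, trivial⟩) (fun s _ => ⟨hg s, trivial⟩) heq ⟨by grind, by grind⟩

section
variable {m n 𝕜 : Type*} [Fintype m] [Fintype n] [DecidableEq n] [RCLike 𝕜]

theorem Matrix.continuous_toContinuousLinearMap_toLin' :
    Continuous fun M : Matrix m n 𝕜 => LinearMap.toContinuousLinearMap (toLin' M) :=
  ((LinearMap.toContinuousLinearMap : ((n → 𝕜) →ₗ[𝕜] (m → 𝕜)) ≃ₗ[𝕜] _).toLinearMap ∘ₗ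
    (toLin' : Matrix m n 𝕜 ≃ₗ[𝕜] _).toLinearMap).continuous_of_finiteDimensional

theorem HasDerivAt.matrix_mulVec {M : ℝ → Matrix m n 𝕜} {M' : Matrix m n 𝕜} {t : ℝ}
    (hM : HasDerivAt M M' t) (ψ : n → 𝕜) : HasDerivAt (fun s => M s *ᵥ ψ) (M' *ᵥ ψ) t :=
  ((LinearMap.toContinuousLinearMap (LinearMap.applyₗ ψ ∘ₗ
    (toLin' : Matrix m n 𝕜 ≃ₗ[𝕜] _).toLinearMap)).restrictScalars ℝ).hasFDerivAt
    |>.comp_hasDerivAt t hM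

theorem Matrix.mulVec_ODE_solution_unique {A : ℝ → Matrix n n 𝕜} (hA : Continuous A)
    {f g : ℝ → n → 𝕜} (hf : ∀ t, HasDerivAt f (A t *ᵥ f t) t) (hg : ∀ t, HasDerivAt g (A t *ᵥ g t) t)
    {t₀ : ℝ} (heq : f t₀ = g t₀) : f = g :=
  ODE_solution_unique_of_continuous_clm (Matrix.continuous_toContinuousLinearMap_toLin'.comp hA)
    (by simpa using hf) (by simpa using hg) heq

theorem fundamental_matrix_add_period {A Φ : ℝ → Matrix n n 𝕜} (hA : Continuous A) {T : ℝ}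
    (hAper : Function.Periodic A T) (hΦ0 : Φ 0 = 1) (hΦ : ∀ t, HasDerivAt Φ (A t * Φ t) t)
    (t : ℝ) : Φ (t + T) = Φ t * Φ T := by
  refine ext_iff_mulVec.2 fun ψ => ?_
  suffices (fun s => Φ (s + T) *ᵥ ψ) = fun s => Φ s *ᵥ (Φ T *ᵥ ψ) by
    simpa [mulVec_mulVec] using congrFun this t
  refine Matrix.mulVec_ODE_solution_unique hA (t₀ := 0) (fun s => ?_) (fun s => ?_) ?_
  · simpa [hAper s, mulVec_mulVec] using
      ((hΦ (s + T)).matrix_mulVec ψ).comp_add_const s T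
  · simpa [mulVec_mulVec, Matrix.mul_assoc] using (hΦ s).matrix_mulVec (Φ T *ᵥ ψ)
  · simp [hΦ0]

theorem HasDerivAt.cexp_neg_mul_smul {f : ℝ → n → ℂ} {M : Matrix n n ℂ} {t : ℝ}
    (hf : HasDerivAt f (M *ᵥ f t) t) (lam : ℂ) :
    HasDerivAt (fun s : ℝ => Complex.exp (-(lam * s)) • f s)
      ((M - lam • 1) *ᵥ (Complex.exp (-(lam * t)) • f t)) t := by
  have hexp : HasDerivAt (fun s : ℝ => Complex.exp (-(lam * s)))
      (Complex.exp (-(lam * t)) * -lam) t := by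
    simpa using ((Complex.ofRealCLM.hasDerivAt (x := t)).const_mul lam).neg.cexp
  refine (hexp.smul hf).congr_deriv ?_
  simp only [sub_mulVec, mulVec_smul, smul_mulVec, one_mulVec]
  module

end

theorem floquet_eigenvector_characterization_general
    (T : ℝ) (n : ℕ)
    (A Φ : ℝ → Matrix (Fin n) (Fin n) ℂ)
    (hA : Continuous A) (hAper : ∀ t : ℝ, A (t + T) = A t)
    (hΦ0 : Φ 0 = 1) (hΦ : ∀ t : ℝ, HasDerivAt Φ (A t * Φ t) t)
    (μ lam : ℂ) (hμ : Complex.exp (lam * T) = μ)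
    (φ : Fin n → ℂ) (v : ℝ → Fin n → ℂ)
    (hv : ∀ t : ℝ, v t = Complex.exp (-(lam * t)) • (Φ t).mulVec φ) :
    v 0 = φ
    ∧ (∀ t : ℝ, HasDerivAt v ((A t - lam • (1 : Matrix (Fin n) (Fin n) ℂ)).mulVec (v t)) t)
    ∧ ((∀ t : ℝ, v (t + T) = v t) ↔ (Φ T).mulVec φ = μ • φ) := by
  obtain rfl : v = fun t : ℝ => Complex.exp (-(lam * t)) • (Φ t).mulVec φ := funext hv
  subst hμ
  refine ⟨by simp [hΦ0], fun t => ?_, ?_⟩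
  · have hsol : HasDerivAt (fun s => Φ s *ᵥ φ) (A t *ᵥ (Φ t *ᵥ φ)) t := by
      simpa [mulVec_mulVec] using (hΦ t).matrix_mulVec φ
    exact hsol.cexp_neg_mul_smul lam
  constructor
  · intro hper
    have h0 : Complex.exp (-(lam * T)) • Φ T *ᵥ φ = φ := by simpa [hΦ0] using hper 0
    conv_rhs => rw [← h0]
    rw [smul_smul, ← Complex.exp_add, add_neg_cancel, Complex.exp_zero, one_smul]
  · intro heig t
    beta_reduce
    rw [fundamental_matrix_add_period hA hAper hΦ0 hΦ, ← mulVec_mulVec, heig,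
      mulVec_smul, smul_smul, ← Complex.exp_add]
    congr 2
    push_cast
    ring

/-- For `exp(λT) = μ` and `v(t) := exp(−λt)·Φ(t)·φ`: `v(0) = φ`, `v` solves
`v′ = (A(t) − λ·1)v`, and `v` is `T`-periodic iff `(μ, φ)` is an eigenpair of the monodromy
matrix `Φ(T)`. -/
theorem floquet_eigenvector_characterization
    (T : ℝ) (hT : 0 < T) (n : ℕ) (hn : 1 ≤ n)
    (A Φ : ℝ → Matrix (Fin n) (Fin n) ℂ)
    (hA : Continuous A) (hAper : ∀ t : ℝ, A (t + T) = A t)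
    (hΦ0 : Φ 0 = 1) (hΦ : ∀ t : ℝ, HasDerivAt Φ (A t * Φ t) t)
    (μ lam : ℂ) (hμ : Complex.exp (lam * T) = μ)
    (φ : Fin n → ℂ) (v : ℝ → Fin n → ℂ)
    (hv : ∀ t : ℝ, v t = Complex.exp (-(lam * t)) • (Φ t).mulVec φ) :
    v 0 = φ
    ∧ (∀ t : ℝ, HasDerivAt v ((A t - lam • (1 : Matrix (Fin n) (Fin n) ℂ)).mulVec (v t)) t)
    ∧ ((∀ t : ℝ, v (t + T) = v t) ↔ (Φ T).mulVec φ = μ • φ) :=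
  floquet_eigenvector_characterization_general T n A Φ hA hAper hΦ0 hΦ μ lam hμ φ v hv
end

section
/- Let μ, λ ∈ ℂ with μ ≠ 0 and exp(λT) = μ, and let φ₁, φ₂ ∈ ℂⁿ satisfy Φ(T)·φ₁ = μ·φ₁ and Φ(T)·φ₂ = μ·φ₂ + φ₁ (a length-2 Jordan chain of the monodromy matrix). Define v₁(t) := exp(−λt)·(Φ(t)·φ₁) and v₂(t) := exp(−λt)·(Φ(t)·φ₂) − (t/(Tμ))·v₁(t). Then v₂(0) = φ₂, v₂ satisfies v₂′(t) = (A(t) − λ·1)·v₂(t) − (1/(Tμ))·v₁(t) for all t, and v₂ is T-periodic: v₂(t+T) = v₂(t) for all t. -/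
/-!
`Φ (t + T)` and `Φ t * Φ T` both solve `X' = A X` and agree at `t = 0`, so they coincide by
uniqueness for linear ODEs with continuous coefficients. Hence shifting `t` by `T` multiplies
`exp (-λt) • Φ t *ᵥ φ` by `μ⁻¹` and replaces `φ` by `Φ T *ᵥ φ`. On the Jordan chain this fixes
`v₁` and adds `μ⁻¹ • v₁` to the first term of `v₂`, which the increment `T / (Tμ)` of the
coefficient `t / (Tμ)` cancels. The derivative formula is the product rule.
-/

attribute [local instance] Matrix.normedAddCommGroup Matrix.normedSpace

open Matrix

theorem HasDerivAt.linearMap_comp {E F : Type*} [NormedAddCommGroup E] [NormedSpace ℝ E]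
    [FiniteDimensional ℝ E] [NormedAddCommGroup F] [NormedSpace ℝ F]
    (f : E →ₗ[ℝ] F) {g : ℝ → E} {g' : E} {t : ℝ} (hg : HasDerivAt g g' t) :
    HasDerivAt (fun s => f (g s)) (f g') t :=
  (LinearMap.toContinuousLinearMap f).hasFDerivAt.comp_hasDerivAt t hg

theorem ODE_solution_unique_linear {E : Type*} [NormedAddCommGroup E] [NormedSpace ℝ E]
    {L : ℝ → E →L[ℝ] E} (hL : Continuous L) {f g : ℝ → E}
    (hf : ∀ t, HasDerivAt f (L t (f t)) t) (hg : ∀ t, HasDerivAt g (L t (g t)) t)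
    {t₀ : ℝ} (h : f t₀ = g t₀) : f = g := by
  ext t
  obtain ⟨a, b, ht, ht₀⟩ : ∃ a b, t ∈ Set.Ioo a b ∧ t₀ ∈ Set.Ioo a b :=
    ⟨min t t₀ - 1, max t t₀ + 1, by constructor <;> constructor <;> grind⟩
  obtain ⟨C, hC⟩ :=
    (isCompact_Icc (a := a) (b := b)).exists_bound_of_continuousOn hL.continuousOn
  have hlip : ∀ s ∈ Set.Ioo a b, LipschitzOnWith C.toNNReal (L s) Set.univ := fun s hs =>
    have hs' : ‖L s‖₊ ≤ C.toNNReal := by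
      simpa using Real.toNNReal_le_toNNReal (hC s (Set.Ioo_subset_Icc_self hs))
    ((L s).lipschitz.weaken hs').lipschitzOnWith
  exact ODE_solution_unique_of_mem_Ioo hlip ht₀ (fun s _ => ⟨hf s, trivial⟩)
    (fun s _ => ⟨hg s, trivial⟩) h ht

theorem cexp_neg_mul_add_period {lam μ : ℂ} {T : ℝ} (hμ : Complex.exp (lam * T) = μ) (t : ℝ) :
    Complex.exp (-(lam * ↑(t + T))) = μ⁻¹ * Complex.exp (-(lam * t)) := by
  rw [Complex.ofReal_add, mul_add, neg_add, Complex.exp_add, Complex.exp_neg (lam * T), hμ,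
    mul_comm]

variable {ι : Type*} [Fintype ι]

theorem continuous_toContinuousLinearMap_mulLeft {A : ℝ → Matrix ι ι ℂ} (hA : Continuous A) :
    Continuous fun s => LinearMap.toContinuousLinearMap (LinearMap.mulLeft ℝ (A s)) :=
  ((LinearMap.toContinuousLinearMap : (Matrix ι ι ℂ →ₗ[ℝ] Matrix ι ι ℂ) ≃ₗ[ℝ] _).toLinearMap ∘ₗ
    LinearMap.mul ℝ (Matrix ι ι ℂ)).continuous_of_finiteDimensional.comp hA

theorem stateTransition_add_period [DecidableEq ι] {A Φ : ℝ → Matrix ι ι ℂ} {T : ℝ}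
    (hA : Continuous A) (hAper : ∀ t, A (t + T) = A t) (hΦ0 : Φ 0 = 1)
    (hΦ : ∀ t, HasDerivAt Φ (A t * Φ t) t) (t : ℝ) : Φ (t + T) = Φ t * Φ T := by
  have hshift : ∀ s, HasDerivAt (fun s => Φ (s + T)) (A s * Φ (s + T)) s := fun s =>
    hAper s ▸ (hΦ (s + T)).comp_add_const s T
  have hmul : ∀ s, HasDerivAt (fun s => Φ s * Φ T) (A s * (Φ s * Φ T)) s := fun s =>
    mul_assoc (A s) (Φ s) (Φ T) ▸ (hΦ s).linearMap_comp (LinearMap.mulRight ℝ (Φ T))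
  have hL := continuous_toContinuousLinearMap_mulLeft hA
  exact congrFun (ODE_solution_unique_linear hL hshift hmul (t₀ := 0) (by simp [hΦ0])) t

theorem hasDerivAt_cexp_neg_smul_mulVec [DecidableEq ι] {A Φ : ℝ → Matrix ι ι ℂ} {t : ℝ}
    (hΦ : HasDerivAt Φ (A t * Φ t) t) (lam : ℂ) (φ : ι → ℂ) :
    HasDerivAt (fun s : ℝ => Complex.exp (-(lam * s)) • (Φ s).mulVec φ)
      ((A t - lam • (1 : Matrix ι ι ℂ)).mulVec (Complex.exp (-(lam * t)) • (Φ t).mulVec φ)) t := by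
  have hexp : HasDerivAt (fun s : ℝ => Complex.exp (-(lam * s)))
      (Complex.exp (-(lam * t)) * -lam) t := by
    simpa using (((hasDerivAt_id t).ofReal_comp.const_mul lam).neg).cexp
  have hvec := hΦ.linearMap_comp ((mulVecBilin ℝ ℝ).flip φ)
  simp only [LinearMap.flip_apply, mulVecBilin_apply] at hvec
  refine (hexp.smul hvec).congr_deriv ?_
  simp only [← mulVec_mulVec, mulVec_smul, sub_mulVec, smul_mulVec, one_mulVec]
  module

theorem cexp_neg_smul_mulVec_add_period [DecidableEq ι] {A Φ : ℝ → Matrix ι ι ℂ} {T : ℝ}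
    (hA : Continuous A) (hAper : ∀ t, A (t + T) = A t) (hΦ0 : Φ 0 = 1)
    (hΦ : ∀ t, HasDerivAt Φ (A t * Φ t) t)
    {lam μ : ℂ} (hμ : Complex.exp (lam * T) = μ) (φ : ι → ℂ) (t : ℝ) :
    Complex.exp (-(lam * ↑(t + T))) • (Φ (t + T)).mulVec φ
      = μ⁻¹ • Complex.exp (-(lam * t)) • (Φ t).mulVec ((Φ T).mulVec φ) := by
  rw [cexp_neg_mul_add_period hμ, stateTransition_add_period hA hAper hΦ0 hΦ,
    ← mulVec_mulVec, smul_smul]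

theorem floquet_generalized_eigenvector_general
    (T : ℝ) (hT : 0 < T) (n : ℕ)
    (A Φ : ℝ → Matrix (Fin n) (Fin n) ℂ)
    (hA : Continuous A) (hAper : ∀ t : ℝ, A (t + T) = A t)
    (hΦ0 : Φ 0 = 1) (hΦ : ∀ t : ℝ, HasDerivAt Φ (A t * Φ t) t)
    (μ lam : ℂ) (hμ0 : μ ≠ 0) (hμ : Complex.exp (lam * T) = μ)
    (φ₁ φ₂ : Fin n → ℂ)
    (hφ₁ : (Φ T).mulVec φ₁ = μ • φ₁)
    (hφ₂ : (Φ T).mulVec φ₂ = μ • φ₂ + φ₁)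
    (v₁ v₂ : ℝ → Fin n → ℂ)
    (hv₁ : ∀ t : ℝ, v₁ t = Complex.exp (-(lam * t)) • (Φ t).mulVec φ₁)
    (hv₂ : ∀ t : ℝ, v₂ t = Complex.exp (-(lam * t)) • (Φ t).mulVec φ₂
      - ((t : ℂ) / ((T : ℂ) * μ)) • v₁ t) :
    v₂ 0 = φ₂
    ∧ (∀ t : ℝ, HasDerivAt v₂
        ((A t - lam • (1 : Matrix (Fin n) (Fin n) ℂ)).mulVec (v₂ t)
          - (1 / ((T : ℂ) * μ)) • v₁ t) t)
    ∧ ∀ t : ℝ, v₂ (t + T) = v₂ t := by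
  have hv₁' : v₁ = fun s : ℝ => Complex.exp (-(lam * s)) • (Φ s).mulVec φ₁ := funext hv₁
  have hv₂' : v₂ = fun s : ℝ => Complex.exp (-(lam * s)) • (Φ s).mulVec φ₂
      - ((s : ℂ) / ((T : ℂ) * μ)) • v₁ s := funext hv₂
  have hshift := cexp_neg_smul_mulVec_add_period hA hAper hΦ0 hΦ hμ
  have hv₁per : ∀ t, v₁ (t + T) = v₁ t := fun t => by
    rw [hv₁, hv₁, hshift, hφ₁, mulVec_smul, smul_comm _ μ, inv_smul_smul₀ hμ0]
  refine ⟨by simp [hv₂, hv₁, hΦ0], fun t => ?_, fun t => ?_⟩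
  · have hc : HasDerivAt (fun s : ℝ => (s : ℂ) / ((T : ℂ) * μ)) (1 / ((T : ℂ) * μ)) t := by
      simpa using (hasDerivAt_id t).ofReal_comp.div_const ((T : ℂ) * μ)
    have hd₁ := hasDerivAt_cexp_neg_smul_mulVec (hΦ t) lam φ₁
    rw [← hv₁', ← hv₁] at hd₁
    rw [hv₂ t, hv₂']
    refine ((hasDerivAt_cexp_neg_smul_mulVec (hΦ t) lam φ₂).sub (hc.smul hd₁)).congr_deriv ?_
    simp only [mulVec_sub, mulVec_smul]
    module
  · have hT0 : (T : ℂ) ≠ 0 := Complex.ofReal_ne_zero.mpr hT.ne'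
    rw [hv₂, hv₂, hv₁per, hshift, hφ₂, mulVec_add, mulVec_smul, hv₁ t]
    push_cast
    match_scalars
    · field_simp
    · field_simp
      ring

/-- Length-2 Jordan chains of the monodromy matrix give `T`-periodic solutions of the generalized
eigenvector initial value problem `v₂′ = (A(t) − λ·1)v₂ − (1/(Tμ))v₁`. -/
theorem floquet_generalized_eigenvector
    (T : ℝ) (hT : 0 < T) (n : ℕ) (hn : 1 ≤ n)
    (A Φ : ℝ → Matrix (Fin n) (Fin n) ℂ)
    (hA : Continuous A) (hAper : ∀ t : ℝ, A (t + T) = A t)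
    (hΦ0 : Φ 0 = 1) (hΦ : ∀ t : ℝ, HasDerivAt Φ (A t * Φ t) t)
    (μ lam : ℂ) (hμ0 : μ ≠ 0) (hμ : Complex.exp (lam * T) = μ)
    (φ₁ φ₂ : Fin n → ℂ)
    (hφ₁ : (Φ T).mulVec φ₁ = μ • φ₁)
    (hφ₂ : (Φ T).mulVec φ₂ = μ • φ₂ + φ₁)
    (v₁ v₂ : ℝ → Fin n → ℂ)
    (hv₁ : ∀ t : ℝ, v₁ t = Complex.exp (-(lam * t)) • (Φ t).mulVec φ₁)
    (hv₂ : ∀ t : ℝ, v₂ t = Complex.exp (-(lam * t)) • (Φ t).mulVec φ₂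
      - ((t : ℂ) / ((T : ℂ) * μ)) • v₁ t) :
    v₂ 0 = φ₂
    ∧ (∀ t : ℝ, HasDerivAt v₂
        ((A t - lam • (1 : Matrix (Fin n) (Fin n) ℂ)).mulVec (v₂ t)
          - (1 / ((T : ℂ) * μ)) • v₁ t) t)
    ∧ ∀ t : ℝ, v₂ (t + T) = v₂ t :=
  floquet_generalized_eigenvector_general T hT n A Φ hA hAper hΦ0 hΦ μ lam hμ0 hμ φ₁ φ₂ hφ₁ hφ₂ v₁
    v₂ hv₁ hv₂
end

section
/- Let Λ be a constant n×n complex matrix and let W : ℝ → Matrix (Fin n) (Fin n) ℂ satisfy W′(t) = A(t)·W(t) − W(t)·Λ for all t (in the sense of HasDerivAt). Then W(t)·exp(t·Λ) = Φ(t)·W(0) for every t ∈ ℝ. Moreover, if W(0) is invertible then W(t) is invertible for every t, so that the transition matrix admits the Floquet factorization Φ(t) = W(t)·exp(t·Λ)·W(0)⁻¹. -/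
/-! The difference `W t * exp (t • Λ) - Φ t * W 0` solves the linear equation `X' = A X` and
vanishes at `0`, so by uniqueness for linear equations it vanishes identically. Similarly, if
`Φ t * B = 0` then `s ↦ Φ s * B` solves `X' = A X` and vanishes at `t`, hence `B = Φ 0 * B = 0`;
in the Artinian ring of matrices this makes `Φ t` a unit, and then so is
`W t = Φ t * W 0 * exp (-t • Λ)`. -/

open Set

theorem ODE_linear_solution_eq_zero {E : Type*} [NormedAddCommGroup E] [NormedSpace ℝ E]
    {A : ℝ → E →L[ℝ] E} (hA : Continuous A) {x : ℝ → E}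
    (hx : ∀ t, HasDerivAt x (A t (x t)) t) {t₀ : ℝ} (h₀ : x t₀ = 0) : x = 0 := by
  funext t
  obtain ⟨a, b, ht, ht₀⟩ : ∃ a b, t ∈ Ioo a b ∧ t₀ ∈ Ioo a b :=
    ⟨min t t₀ - 1, max t t₀ + 1, by constructor <;> grind, by constructor <;> grind⟩
  obtain ⟨C, hC⟩ := isCompact_Icc.exists_bound_of_continuousOn (hA.continuousOn (s := Icc a b))
  have hLip : ∀ s ∈ Ioo a b, LipschitzOnWith C.toNNReal (A s) univ := fun s hs => by
    refine ((A s).lipschitz.weaken ?_).lipschitzOnWith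
    rw [← NNReal.coe_le_coe, coe_nnnorm, Real.coe_toNNReal']
    exact (hC s (Ioo_subset_Icc_self hs)).trans (le_max_left C 0)
  exact ODE_solution_unique_of_mem_Ioo hLip ht₀ (fun s _ => ⟨hx s, mem_univ _⟩)
    (fun s _ => ⟨by simp, mem_univ _⟩) h₀ ht

section NormedRing

variable {𝔸 : Type*} [NormedRing 𝔸] [NormedAlgebra ℝ 𝔸] {A Φ : ℝ → 𝔸}

theorem ODE_mul_left_solution_eq_zero {X : ℝ → 𝔸} (hA : Continuous A)
    (hX : ∀ t, HasDerivAt X (A t * X t) t) {t₀ : ℝ} (h₀ : X t₀ = 0) : X = 0 :=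
  ODE_linear_solution_eq_zero ((ContinuousLinearMap.mul ℝ 𝔸).continuous.comp hA) hX h₀

theorem mul_exp_smul_eq_mul_of_hasDerivAt [CompleteSpace 𝔸] {W : ℝ → 𝔸} {Λ : 𝔸}
    (hA : Continuous A) (hΦ0 : Φ 0 = 1) (hΦ : ∀ t, HasDerivAt Φ (A t * Φ t) t)
    (hW : ∀ t, HasDerivAt W (A t * W t - W t * Λ) t) (t : ℝ) :
    W t * NormedSpace.exp (t • Λ) = Φ t * W 0 := by
  have hdiff : ∀ s, HasDerivAt (fun s => W s * NormedSpace.exp (s • Λ) - Φ s * W 0)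
      (A s * (W s * NormedSpace.exp (s • Λ) - Φ s * W 0)) s := fun s => by
    refine (((hW s).fun_mul (hasDerivAt_exp_smul_const' Λ s)).fun_sub
      ((hΦ s).mul_const (W 0))).congr_deriv ?_
    noncomm_ring
  exact sub_eq_zero.1 <|
    congrFun (ODE_mul_left_solution_eq_zero hA hdiff (t₀ := 0) (by simp [hΦ0])) t

theorem isUnit_of_hasDerivAt_eq_mul [IsArtinianRing 𝔸ᵐᵒᵖ] (hA : Continuous A)
    (hΦ : ∀ t, HasDerivAt Φ (A t * Φ t) t) {t₀ : ℝ} (hΦt₀ : IsUnit (Φ t₀)) (t : ℝ) :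
    IsUnit (Φ t) := by
  refine IsArtinianRing.isUnit_iff_isLeftRegular.2 fun B C hBC => sub_eq_zero.1 ?_
  have hX : ∀ s, HasDerivAt (fun s => Φ s * (B - C)) (A s * (Φ s * (B - C))) s := fun s => by
    simpa only [mul_assoc] using (hΦ s).mul_const (B - C)
  have hX0 := ODE_mul_left_solution_eq_zero hA hX (t₀ := t)
    (by rw [mul_sub]; exact sub_eq_zero.2 hBC)
  exact hΦt₀.mul_right_eq_zero.1 (congrFun hX0 t₀)

end NormedRing

theorem floquet_factorization_general
    (n : ℕ)
    (A Φ : ℝ → Matrix (Fin n) (Fin n) ℂ)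
    (hA : Continuous A)
    (hΦ0 : Φ 0 = 1) (hΦ : ∀ t : ℝ, HasDerivAt Φ (A t * Φ t) t)
    (Λ : Matrix (Fin n) (Fin n) ℂ)
    (W : ℝ → Matrix (Fin n) (Fin n) ℂ)
    (hW : ∀ t : ℝ, HasDerivAt W (A t * W t - W t * Λ) t) :
    (∀ t : ℝ, W t * NormedSpace.exp ((t : ℂ) • Λ) = Φ t * W 0)
    ∧ (IsUnit (W 0) → ∀ t : ℝ,
        IsUnit (W t) ∧ Φ t = W t * NormedSpace.exp ((t : ℂ) • Λ) * (W 0)⁻¹) := by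
  -- The entrywise sup norm is not submultiplicative; the operator norm is, and it induces the same
  -- topology, so `hA`, `hΦ` and `hW` can be read in this normed ring without change. Its
  -- completeness is not found by instance search and is supplied by hand.
  let _ : NormedRing (Matrix (Fin n) (Fin n) ℂ) := Matrix.linftyOpNormedRing
  let _ : NormedAlgebra ℝ (Matrix (Fin n) (Fin n) ℂ) := Matrix.linftyOpNormedAlgebra
  have := @FiniteDimensional.complete ℝ (Matrix (Fin n) (Fin n) ℂ) _ _ _
    PseudoMetricSpace.toUniformSpace
  have hWexp (t : ℝ) : W t * NormedSpace.exp ((t : ℂ) • Λ) = Φ t * W 0 := by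
    rw [Complex.coe_smul]
    exact mul_exp_smul_eq_mul_of_hasDerivAt hA hΦ0 hΦ hW t
  refine ⟨hWexp, fun hW0 t => ⟨?_, ?_⟩⟩
  · rw [← (Matrix.isUnit_exp _).mul_right_iff, hWexp]
    exact (isUnit_of_hasDerivAt_eq_mul hA hΦ (t₀ := 0) (hΦ0 ▸ isUnit_one) t).mul hW0
  · rw [hWexp, Matrix.mul_nonsing_inv_cancel_right _ _ ((Matrix.isUnit_iff_isUnit_det _).1 hW0)]

/-- If `W′(t) = A(t)W(t) − W(t)Λ` then `W(t)·exp(tΛ) = Φ(t)·W(0)`; moreover if `W(0)` is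
invertible then so is every `W(t)`, and `Φ(t) = W(t)·exp(tΛ)·W(0)⁻¹` (Floquet factorization). -/
theorem floquet_factorization
    (T : ℝ) (hT : 0 < T) (n : ℕ) (hn : 1 ≤ n)
    (A Φ : ℝ → Matrix (Fin n) (Fin n) ℂ)
    (hA : Continuous A) (hAper : ∀ t : ℝ, A (t + T) = A t)
    (hΦ0 : Φ 0 = 1) (hΦ : ∀ t : ℝ, HasDerivAt Φ (A t * Φ t) t)
    (Λ : Matrix (Fin n) (Fin n) ℂ)
    (W : ℝ → Matrix (Fin n) (Fin n) ℂ)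
    (hW : ∀ t : ℝ, HasDerivAt W (A t * W t - W t * Λ) t) :
    (∀ t : ℝ, W t * NormedSpace.exp ((t : ℂ) • Λ) = Φ t * W 0)
    ∧ (IsUnit (W 0) → ∀ t : ℝ,
        IsUnit (W t) ∧ Φ t = W t * NormedSpace.exp ((t : ℂ) • Λ) * (W 0)⁻¹) :=
  floquet_factorization_general n A Φ hA hΦ0 hΦ Λ W hW
end

section
/- Let Λ be a constant n×n complex matrix and let W : ℝ → Matrix (Fin n) (Fin n) ℂ satisfy W′(t) = A(t)·W(t) − W(t)·Λ for all t, with W T-periodic (W(t+T) = W(t) for all t) and W(0) invertible. Then the monodromy matrix satisfies Φ(T) = W(T)·exp(T·Λ)·W(T)⁻¹; in particular Φ(T) is similar to exp(T·Λ). -/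
/-!
Both `t ↦ Φ(t) W(0)` and `t ↦ W(t) exp(tΛ)` solve `X' = A X` with initial value `W(0)`, so they
coincide by uniqueness for linear equations with continuous coefficients. At `t = T` periodicity
gives `W(T) = W(0)`, whence `Φ(T) W(T) = W(T) exp(TΛ)`.
-/

open Set

section LinearODE

variable {E : Type*} [NormedRing E] [NormedSpace ℝ E]

theorem eq_of_hasDerivAt_mul_left {A X Y : ℝ → E} (hA : Continuous A)
    (hX : ∀ t, HasDerivAt X (A t * X t) t) (hY : ∀ t, HasDerivAt Y (A t * Y t) t)
    {t₀ : ℝ} (h₀ : X t₀ = Y t₀) : X = Y := by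
  funext t
  obtain ⟨a, b, ht, ht₀⟩ : ∃ a b, t ∈ Ioo a b ∧ t₀ ∈ Ioo a b :=
    ⟨min t t₀ - 1, max t t₀ + 1, by constructor <;> constructor <;> grind⟩
  obtain ⟨K, hK⟩ := isCompact_Icc.exists_bound_of_continuousOn (hA.continuousOn (s := Icc a b))
  have hlip : ∀ s ∈ Ioo a b, LipschitzOnWith K.toNNReal (A s * ·) univ := fun s hs =>
    ((lipschitzWith_smul (A s)).weaken
      (NNReal.le_toNNReal_of_coe_le (hK s (Ioo_subset_Icc_self hs)))).lipschitzOnWith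
  exact ODE_solution_unique_of_mem_Ioo hlip ht₀ (fun s _ => ⟨hX s, mem_univ _⟩)
    (fun s _ => ⟨hY s, mem_univ _⟩) h₀ ht

end LinearODE

section Floquet

variable {𝔸 : Type*} [NormedRing 𝔸] [NormedAlgebra ℝ 𝔸] [CompleteSpace 𝔸]

theorem hasDerivAt_mul_exp_smul {A W : ℝ → 𝔸} {Λ : 𝔸} {t : ℝ}
    (hW : HasDerivAt W (A t * W t - W t * Λ) t) :
    HasDerivAt (fun s => W s * NormedSpace.exp (s • Λ))
      (A t * (W t * NormedSpace.exp (t • Λ))) t := by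
  refine (hW.mul (hasDerivAt_exp_smul_const' Λ t)).congr_deriv ?_
  noncomm_ring

theorem mul_eq_mul_exp_smul_of_hasDerivAt {A Φ W : ℝ → 𝔸} {Λ : 𝔸} (hA : Continuous A)
    (hΦ0 : Φ 0 = 1) (hΦ : ∀ t, HasDerivAt Φ (A t * Φ t) t)
    (hW : ∀ t, HasDerivAt W (A t * W t - W t * Λ) t) (t : ℝ) :
    Φ t * W 0 = W t * NormedSpace.exp (t • Λ) := by
  have hΦW : ∀ s, HasDerivAt (fun s => Φ s * W 0) (A s * (Φ s * W 0)) s := fun s => by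
    simpa only [mul_assoc] using (hΦ s).mul_const (W 0)
  refine congrFun (eq_of_hasDerivAt_mul_left hA hΦW (fun s => hasDerivAt_mul_exp_smul (hW s))
    (t₀ := 0) ?_) t
  simp [hΦ0]

end Floquet

theorem monodromy_similar_exp_general
    (T : ℝ) (n : ℕ)
    (A Φ : ℝ → Matrix (Fin n) (Fin n) ℂ)
    (hA : Continuous A)
    (hΦ0 : Φ 0 = 1) (hΦ : ∀ t : ℝ, HasDerivAt Φ (A t * Φ t) t)
    (Λ : Matrix (Fin n) (Fin n) ℂ)
    (W : ℝ → Matrix (Fin n) (Fin n) ℂ)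
    (hW : ∀ t : ℝ, HasDerivAt W (A t * W t - W t * Λ) t)
    (hWper : ∀ t : ℝ, W (t + T) = W t)
    (hW0 : IsUnit (W 0)) :
    Φ T = W T * NormedSpace.exp ((T : ℂ) • Λ) * (W T)⁻¹ := by
  -- The entrywise sup norm is not submultiplicative; `HasDerivAt`, continuity and `exp` only see
  -- the topology, which the `ℓ∞`-operator norm shares.
  let : NormedRing (Matrix (Fin n) (Fin n) ℂ) := Matrix.linftyOpNormedRing
  let : NormedAlgebra ℝ (Matrix (Fin n) (Fin n) ℂ) := Matrix.linftyOpNormedAlgebra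
  have hWT : W T = W 0 := by simpa using hWper 0
  have key : Φ T * W T = W T * NormedSpace.exp (T • Λ) :=
    hWT ▸ mul_eq_mul_exp_smul_of_hasDerivAt hA hΦ0 hΦ hW T
  rw [Complex.coe_smul, ← key,
    Matrix.mul_nonsing_inv_cancel_right _ _ ((Matrix.isUnit_iff_isUnit_det _).mp (hWT ▸ hW0))]

/-- If `W′(t) = A(t)W(t) − W(t)Λ`, `W` is `T`-periodic and `W(0)` invertible, then the monodromy
matrix satisfies `Φ(T) = W(T)·exp(TΛ)·W(T)⁻¹`: it is similar to `exp(TΛ)`. -/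
theorem monodromy_similar_exp
    (T : ℝ) (hT : 0 < T) (n : ℕ) (hn : 1 ≤ n)
    (A Φ : ℝ → Matrix (Fin n) (Fin n) ℂ)
    (hA : Continuous A) (hAper : ∀ t : ℝ, A (t + T) = A t)
    (hΦ0 : Φ 0 = 1) (hΦ : ∀ t : ℝ, HasDerivAt Φ (A t * Φ t) t)
    (Λ : Matrix (Fin n) (Fin n) ℂ)
    (W : ℝ → Matrix (Fin n) (Fin n) ℂ)
    (hW : ∀ t : ℝ, HasDerivAt W (A t * W t - W t * Λ) t)
    (hWper : ∀ t : ℝ, W (t + T) = W t)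
    (hW0 : IsUnit (W 0)) :
    Φ T = W T * NormedSpace.exp ((T : ℂ) • Λ) * (W T)⁻¹ :=
  monodromy_similar_exp_general T n A Φ hA hΦ0 hΦ Λ W hW hWper hW0
end

section
/- Let a : ℤ → ℂ be square-summable, ω a real number, λ ∈ ℂ, and m ∈ ℕ. Suppose W : ℤ → ℂ is square-summable, W(i) = 0 for all i < −m, and for every i ≥ −m: Σ_{r ≥ −m} a(i−r)·W(r) − i·ω·i·W(i) = λ·W(i) (so (λ, W) is an eigenpair of the left m-truncation 𝒜_{m⁺} − 𝒩_{m⁺}). Then the shifted sequence W′(i) := W(i+1) vanishes for i < −(m+1) and satisfies, for every i ≥ −(m+1): Σ_{r ≥ −(m+1)} a(i−r)·W′(r) − i·ω·i·W′(i) = (λ + i·ω)·W′(i). In other words, λ + iω is an eigenvalue of the left (m+1)-truncation, with the shifted eigenvector. -/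
/-- If `(λ, W)` is an eigenpair of the left `m`-truncation `𝒜_{m⁺} − 𝒩_{m⁺}`, then the shifted
sequence `i ↦ W(i+1)` is an eigenvector of the left `(m+1)`-truncation for the eigenvalue
`λ + iω`. -/
theorem left_truncation_shifted_eigenpair
    (a : ℤ → ℂ) (ha : Summable fun k => ‖a k‖ ^ 2)
    (ω : ℝ) (lam : ℂ) (m : ℕ) (W : ℤ → ℂ)
    (hW2 : Summable fun k => ‖W k‖ ^ 2)
    (hW0 : ∀ i : ℤ, i < -(m : ℤ) → W i = 0)
    (heig : ∀ i : ℤ, -(m : ℤ) ≤ i →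
      (∑' r : {r : ℤ // -(m : ℤ) ≤ r}, a (i - (r : ℤ)) * W (r : ℤ))
        - Complex.I * ω * i * W i = lam * W i) :
    (∀ i : ℤ, i < -((m : ℤ) + 1) → W (i + 1) = 0)
    ∧ ∀ i : ℤ, -((m : ℤ) + 1) ≤ i →
      (∑' r : {r : ℤ // -((m : ℤ) + 1) ≤ r}, a (i - (r : ℤ)) * W ((r : ℤ) + 1))
        - Complex.I * ω * i * W (i + 1) = (lam + Complex.I * ω) * W (i + 1) := by
  constructor
  · intro i hi
    exact hW0 (i + 1) (by omega)
  · intro i hi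
    let e : {r : ℤ // -((m : ℤ) + 1) ≤ r} ≃ {s : ℤ // -(m : ℤ) ≤ s} :=
      { toFun := fun r => ⟨r.1 + 1, by have := r.2; omega⟩
        invFun := fun s => ⟨s.1 - 1, by have := s.2; omega⟩
        left_inv := fun r => by ext; simp
        right_inv := fun s => by ext; simp }
    have hsum : (∑' r : {r : ℤ // -((m : ℤ) + 1) ≤ r}, a (i - (r : ℤ)) * W ((r : ℤ) + 1))
        = ∑' s : {s : ℤ // -(m : ℤ) ≤ s}, a ((i + 1) - (s : ℤ)) * W (s : ℤ) := by
      rw [← Equiv.tsum_eq e (fun s : {s : ℤ // -(m : ℤ) ≤ s} => a ((i + 1) - (s : ℤ)) * W (s : ℤ))]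
      apply tsum_congr
      intro r
      have : (i + 1) - ((r : ℤ) + 1) = i - (r : ℤ) := by ring
      show a (i - (r : ℤ)) * W ((r : ℤ) + 1) = a ((i + 1) - ((r : ℤ) + 1)) * W ((r : ℤ) + 1)
      rw [this]
    have h := heig (i + 1) (by omega)
    push_cast at h
    rw [hsum]
    have : (∑' s : {s : ℤ // -(m : ℤ) ≤ s}, a ((i + 1) - (s : ℤ)) * W (s : ℤ))
        = lam * W (i + 1) + Complex.I * ω * (i + 1) * W (i + 1) := by
      linear_combination h
    rw [this]
    push_cast
    ring
end

section
/- Let T > 0, ω := 2π/T, let f : AddCircle T → ℂ be essentially bounded with Fourier coefficients a(k) := fourierCoeff f k, let λ ∈ ℂ, and let V : ℤ → ℂ be square-summable with Σ_{r∈ℤ} a(k−r)·V(r) − i·ω·k·V(k) = λ·V(k) for all k ∈ ℤ (i.e. (λ, V) is an eigenpair of 𝒜 − 𝒩). Then for every ε > 0 there exists j₀ ∈ ℕ such that for every m ≥ j₀ and every integer k′ with |k′| ≤ m − j₀: Σ_{i=−m}^{m} | Σ_{r=−m}^{m} a(i−r)·V(r+k′) − (λ + i·ω·(i+k′))·V(i+k′)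 |² < ε². That is, the m-truncations of the shifted eigenvectors are ε-approximate eigenvectors, with eigenvalues λ + iωk′, of the finite (2m+1)×(2m+1) truncated harmonic matrix 𝒜_m − 𝒩_m. -/
/-!
Multiplication by `f ∈ L^∞` is a bounded operator on `L²` of norm at most `‖f‖_∞`; in the Fourier
basis it is the Laurent operator `𝒜 = (a(i - r))_{i,r}` on `ℓ²(ℤ)`. Put `S = [k′ - m, k′ + m]` and
let `w` be the part of `V` outside `S`. By the eigen-equation at `i + k′` the diagonal terms cancel,
and the `i`-th residual of the truncated shifted eigenvector is exactly `-(𝒜 w)(i + k′)`. So the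
total squared residual is at most `‖f‖_∞² ‖w‖²`, which is small once `S` contains a fixed window
`[-j₀, j₀]` carrying all but a small part of the `ℓ²`-mass of `V`.
-/

open MeasureTheory

open scoped lp

namespace Finset

theorem sum_Icc_add' {α M : Type*} [AddCommMonoid M] [AddCommMonoid α] [PartialOrder α]
    [IsOrderedCancelAddMonoid α] [ExistsAddOfLE α] [LocallyFiniteOrder α]
    (f : α → M) (a b c : α) : ∑ x ∈ Icc a b, f (x + c) = ∑ x ∈ Icc (a + c) (b + c), f x := by
  rw [← map_add_right_Icc, sum_map]
  rfl

theorem subset_Icc_add_of_abs_le (s : Finset ℤ) {m k : ℤ}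
    (hk : |k| ≤ m - (s.sup Int.natAbs : ℕ)) : s ⊆ Icc (-m + k) (m + k) := fun x hx => by
  have := le_sup (f := Int.natAbs) hx
  rw [abs_le] at hk
  rw [mem_Icc]
  omega

end Finset

namespace lp

variable {ι : Type*} {E : ι → Type*} [∀ i, NormedAddCommGroup (E i)]

theorem exists_norm_sub_sum_single_lt [DecidableEq ι] {p : ENNReal} [Fact (1 ≤ p)] (hp : p ≠ ⊤)
    (v : lp E p) {δ : ℝ} (hδ : 0 < δ) :
    ∃ s₀ : Finset ι, ∀ s, s₀ ⊆ s → ‖v - ∑ i ∈ s, lp.single p i (v i)‖ < δ := by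
  obtain ⟨s₀, hs₀⟩ := Filter.eventually_atTop.mp
    ((lp.hasSum_single hp v).eventually (Metric.ball_mem_nhds v hδ))
  exact ⟨s₀, fun s hs => by simpa [dist_eq_norm'] using hs₀ s hs⟩

theorem sum_sq_norm_le_sq_norm (v : lp E 2) (s : Finset ι) : ∑ i ∈ s, ‖v i‖ ^ 2 ≤ ‖v‖ ^ 2 := by
  simpa using lp.sum_rpow_le_norm_rpow (by norm_num) v s

end lp

namespace AddCircle

variable {T : ℝ} [Fact (0 < T)]

theorem fourierCoeff_mul_fourier (f : AddCircle T → ℂ) (r j : ℤ) :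
    fourierCoeff (fun t => f t * fourier r t) j = fourierCoeff f (j - r) := by
  simp only [fourierCoeff, smul_eq_mul]
  congr 1
  ext t
  rw [show -(j - r) = -j + r by ring, fourier_add]
  ring

/-- Multiplication by `F` on `L²`, transported to `ℓ²(ℤ)` by the Fourier basis: the operator `𝒜`
of the harmonic matrix. -/
noncomputable def laurentOperator (F : Lp ℂ ⊤ (haarAddCircle (T := T))) :
    ℓ²(ℤ, ℂ) →L[ℂ] ℓ²(ℤ, ℂ) :=
  fourierBasis.repr.toContinuousLinearEquiv.toContinuousLinearMap ∘L
    (ContinuousLinearMap.mul ℂ ℂ).holderL haarAddCircle ⊤ 2 2 F ∘L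
    fourierBasis.repr.symm.toContinuousLinearEquiv.toContinuousLinearMap

variable (F : Lp ℂ ⊤ (haarAddCircle (T := T)))

theorem laurentOperator_apply (v : ℓ²(ℤ, ℂ)) :
    laurentOperator F v
      = fourierBasis.repr ((ContinuousLinearMap.mul ℂ ℂ).holder 2 F (fourierBasis.repr.symm v)) :=
  rfl

theorem norm_laurentOperator_apply_le (v : ℓ²(ℤ, ℂ)) : ‖laurentOperator F v‖ ≤ ‖F‖ * ‖v‖ := by
  rw [laurentOperator_apply, LinearIsometryEquiv.norm_map]
  calc _ ≤ ‖ContinuousLinearMap.mul ℂ ℂ‖ * ‖F‖ * ‖fourierBasis.repr.symm v‖ :=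
        ContinuousLinearMap.norm_holder_apply_apply_le _ _ _
    _ ≤ ‖F‖ * ‖v‖ := by
        rw [LinearIsometryEquiv.norm_map]
        gcongr
        exact mul_le_of_le_one_left (norm_nonneg F) (ContinuousLinearMap.opNorm_mul_le ℂ ℂ)

theorem laurentOperator_single (r : ℤ) (c : ℂ) (j : ℤ) :
    laurentOperator F (lp.single 2 r c) j = fourierCoeff F (j - r) * c := by
  have hprod : (ContinuousLinearMap.mul ℂ ℂ).holder 2 F (fourierLp 2 r)
      =ᵐ[haarAddCircle] fun t => F t * fourier r t := by
    filter_upwards [(ContinuousLinearMap.mul ℂ ℂ).coeFn_holder (r := 2) F (fourierLp 2 r),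
      coeFn_fourierLp 2 r] with t h1 h2
    rw [h1, h2, ContinuousLinearMap.mul_apply']
  have hsingle : lp.single (E := fun _ : ℤ => ℂ) 2 r c = c • lp.single 2 r (1 : ℂ) := by
    rw [← lp.single_smul, smul_eq_mul, mul_one]
  rw [hsingle, map_smul, lp.coeFn_smul, Pi.smul_apply,
    laurentOperator_apply, HilbertBasis.repr_symm_single, coe_fourierBasis, fourierBasis_repr,
    fourierCoeff_congr_ae hprod, fourierCoeff_mul_fourier, smul_eq_mul, mul_comm]

theorem hasSum_laurentOperator_apply (v : ℓ²(ℤ, ℂ)) (j : ℤ) :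
    HasSum (fun r => fourierCoeff F (j - r) * v r) (laurentOperator F v j) := by
  have h : HasSum (fun r => laurentOperator F (lp.single 2 r (v r)) j) (laurentOperator F v j) :=
    (lp.evalCLM ℂ (fun _ : ℤ => ℂ) 2 j).hasSum
      ((laurentOperator F).hasSum (lp.hasSum_single (by norm_num) v))
  simpa only [laurentOperator_single] using h

theorem laurentOperator_sub_sum_single_apply (v : ℓ²(ℤ, ℂ)) (s : Finset ℤ) (j : ℤ) :
    laurentOperator F (v - ∑ r ∈ s, lp.single 2 r (v r)) j
      = ∑' r, fourierCoeff F (j - r) * v r - ∑ r ∈ s, fourierCoeff F (j - r) * v r := by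
  simp only [map_sub, map_sum, lp.coeFn_sub, lp.coeFn_sum, Pi.sub_apply, Finset.sum_apply,
    laurentOperator_single, (hasSum_laurentOperator_apply F v j).tsum_eq]

end AddCircle

open AddCircle in
theorem truncation_approximate_eigenvectors_general
    (T : ℝ) [hT : Fact (0 < T)] (ω : ℝ)
    (f : AddCircle T → ℂ) (hf : MemLp f ⊤ AddCircle.haarAddCircle)
    (lam : ℂ) (V : ℤ → ℂ) (hV2 : Summable fun k => ‖V k‖ ^ 2)
    (heig : ∀ k : ℤ, (∑' r : ℤ, fourierCoeff f (k - r) * V r)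
      - Complex.I * ω * k * V k = lam * V k) :
    ∀ ε > (0 : ℝ), ∃ j₀ : ℕ, ∀ m : ℕ, j₀ ≤ m → ∀ k' : ℤ, |k'| ≤ (m : ℤ) - (j₀ : ℤ) →
      ∑ i ∈ Finset.Icc (-(m : ℤ)) (m : ℤ),
        ‖(∑ r ∈ Finset.Icc (-(m : ℤ)) (m : ℤ), fourierCoeff f (i - r) * V (r + k'))
          - (lam + Complex.I * ω * (i + k')) * V (i + k')‖ ^ 2 < ε ^ 2 := by
  intro ε hε
  set F := hf.toLp f
  have hF : fourierCoeff F = fourierCoeff f := fourierCoeff_congr_ae hf.coeFn_toLp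
  let v : ℓ²(ℤ, ℂ) := ⟨V, memℓp_gen (by simpa using hV2)⟩
  obtain ⟨s₀, hs₀⟩ := lp.exists_norm_sub_sum_single_lt (by norm_num) v
    (δ := ε / (‖F‖ + 1)) (by positivity)
  refine ⟨s₀.sup Int.natAbs, fun m _ k' hk' => ?_⟩
  set S := Finset.Icc (-(m : ℤ) + k') (m + k')
  set w := v - ∑ r ∈ S, lp.single 2 r (v r)
  have hrow : ∀ i : ℤ, (∑ r ∈ Finset.Icc (-(m : ℤ)) (m : ℤ), fourierCoeff f (i - r) * V (r + k'))
      - (lam + Complex.I * ω * (i + k')) * V (i + k') = -laurentOperator F w (i + k') := by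
    intro i
    have hshift : ∑ r ∈ Finset.Icc (-(m : ℤ)) (m : ℤ), fourierCoeff f (i - r) * V (r + k')
        = ∑ r ∈ S, fourierCoeff f (i + k' - r) * V r := by
      rw [← Finset.sum_Icc_add']
      simp_rw [add_sub_add_right_eq_sub]
    have heig' := heig (i + k')
    push_cast at heig'
    rw [laurentOperator_sub_sum_single_apply, hF, hshift]
    linear_combination heig'
  calc _ = ∑ j ∈ S, ‖laurentOperator F w j‖ ^ 2 := by
        simp_rw [hrow, norm_neg]
        exact Finset.sum_Icc_add' (fun j => ‖laurentOperator F w j‖ ^ 2) _ _ _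
    _ ≤ ‖laurentOperator F w‖ ^ 2 := lp.sum_sq_norm_le_sq_norm _ _
    _ ≤ (‖F‖ * (ε / (‖F‖ + 1))) ^ 2 := by
        gcongr
        exact (norm_laurentOperator_apply_le F w).trans
          (by gcongr; exact (hs₀ S (s₀.subset_Icc_add_of_abs_le hk')).le)
    _ < ε ^ 2 := by
        gcongr
        rw [mul_div_left_comm]
        exact mul_lt_of_lt_one_right hε ((div_lt_one (by positivity)).mpr (lt_add_one _))

/-- `m`-truncations of the (shifted) eigenvectors of the harmonic operator `𝒜 − 𝒩` are
`ε`-approximate eigenvectors of the finite `(2m+1)×(2m+1)` truncated harmonic matrix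
`𝒜_m − 𝒩_m`, with eigenvalues `λ + iωk′`, provided `|k′| ≤ m − j₀` with `j₀` large enough. -/
theorem truncation_approximate_eigenvectors
    (T : ℝ) [hT : Fact (0 < T)] (ω : ℝ) (hω : ω = 2 * Real.pi / T)
    (f : AddCircle T → ℂ) (hf : MemLp f ⊤ AddCircle.haarAddCircle)
    (lam : ℂ) (V : ℤ → ℂ) (hV2 : Summable fun k => ‖V k‖ ^ 2)
    (heig : ∀ k : ℤ, (∑' r : ℤ, fourierCoeff f (k - r) * V r)
      - Complex.I * ω * k * V k = lam * V k) :
    ∀ ε > (0 : ℝ), ∃ j₀ : ℕ, ∀ m : ℕ, j₀ ≤ m → ∀ k' : ℤ, |k'| ≤ (m : ℤ) - (j₀ : ℤ) →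
      ∑ i ∈ Finset.Icc (-(m : ℤ)) (m : ℤ),
        ‖(∑ r ∈ Finset.Icc (-(m : ℤ)) (m : ℤ), fourierCoeff f (i - r) * V (r + k'))
          - (lam + Complex.I * ω * (i + k')) * V (i + k')‖ ^ 2 < ε ^ 2 :=
  truncation_approximate_eigenvectors_general T (hT := hT) ω f hf lam V hV2 heig
end

section
/- Let T > 0, ω := 2π/T, and let a, p, q : ℤ → ℂ with a and p square-summable and conj(a(k)) = a(−k) for all k (real symbol). Assume the scalar symbol harmonic Lyapunov equation holds: for every k ∈ ℤ, 2·Σ_{r∈ℤ} a(k−r)·p(r) + i·ω·k·p(k) + q(k) = 0. Fix m ∈ ℕ and let A_m, N_m, Q_m, 𝒫_m be the (2m+1)×(2m+1) matrices indexed by i, j ∈ {−m,…,m} with (A_m)_{ij} = a(i−j), (N_m)_{ij} = i·ω·i·δ_{ij}, (Q_m)_{ij} = q(i−j), (𝒫_m)_{ij} = p(i−j). If P_m is any (2m+1)×(2m+1) complex matrix satisfying the truncated harmonic Lyapunov equation (A_m − N_m)^* P_m + P_m (A_m − N_m) + Q_m = 0, then ΔP := P_m − 𝒫_m satisfies, for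 all i, j with |i|, |j| ≤ m: ((A_m − N_m)^* ΔP + ΔP (A_m − N_m))_{ij} = Σ_{|r| > m} ( a(i−r)·p(r−j) + p(i−r)·a(r−j) ). In particular the solution of the truncated Lyapunov equation equals the truncation of the Toeplitz solution plus a correction term governed by Hankel tail sums. -/
open Matrix

/-!
Write `L X := (A_m − N_m)^* X + X (A_m − N_m)`. Since `a` is a real symbol, `A_m` is Hermitian,
and `N_m` is skew-Hermitian diagonal, so `(L X)_{ij} = (A_m X + X A_m)_{ij} + iω(i − j) X_{ij}`.
For the Toeplitz truncation `𝒫_m` this is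
`Σ_{|r| ≤ m} (a(i−r)p(r−j) + p(i−r)a(r−j)) + iω(i−j)p(i−j)`, while the symbol equation at
`k = i − j` says that `−q(i−j)` is the same expression with the sum over all `r ∈ ℤ`. Hence
`L(P_m − 𝒫_m) = −Q_m − L 𝒫_m` is the tail `|r| > m` of that series.
-/

theorem summable_mul_of_summable_norm_sq {ι R : Type*} [NormedRing R] [CompleteSpace R]
    {f g : ι → R} (hf : Summable fun i => ‖f i‖ ^ 2) (hg : Summable fun i => ‖g i‖ ^ 2) :
    Summable fun i => f i * g i := by
  refine Summable.of_norm <| (hf.add hg).of_nonneg_of_le (fun _ => norm_nonneg _) fun i => ?_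
  calc ‖f i * g i‖ ≤ ‖f i‖ * ‖g i‖ := norm_mul_le _ _
    _ ≤ ‖f i‖ ^ 2 + ‖g i‖ ^ 2 := by
      linarith [two_mul_le_add_sq ‖f i‖ ‖g i‖, mul_nonneg (norm_nonneg (f i)) (norm_nonneg (g i))]

theorem summable_mul_comp_sub_of_summable_norm_sq {G R : Type*} [AddGroup G] [NormedRing R]
    [CompleteSpace R] {a p : G → R} (ha : Summable fun k => ‖a k‖ ^ 2)
    (hp : Summable fun k => ‖p k‖ ^ 2) (i j : G) :
    Summable fun r => a (i - r) * p (r - j) :=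
  summable_mul_of_summable_norm_sq
    ((Equiv.subLeft i).summable_iff (f := fun k => ‖a k‖ ^ 2) |>.2 ha)
    ((Equiv.subRight j).summable_iff (f := fun k => ‖p k‖ ^ 2) |>.2 hp)

section Reindexing

variable {G R : Type*} [AddCommGroup G] [CommSemiring R] [TopologicalSpace R]

theorem tsum_mul_comp_sub (a p : G → R) (i j : G) :
    ∑' k, a (i - k) * p (k - j) = ∑' r, a (i - j - r) * p r := by
  rw [← (Equiv.addRight j).tsum_eq]
  simp only [Equiv.coe_addRight, sub_add_eq_sub_sub_swap, add_sub_cancel_right]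

theorem tsum_comp_sub_mul_comm (a p : G → R) (c : G) :
    ∑' r, p (c - r) * a r = ∑' r, a (c - r) * p r := by
  rw [← (Equiv.subLeft c).tsum_eq]
  simp only [Equiv.subLeft_apply, sub_sub_cancel, mul_comm]

end Reindexing

theorem Fin.sum_centered_eq_sum_Icc {M : Type*} [AddCommMonoid M] (m : ℕ) (g : ℤ → M) :
    ∑ k : Fin (2 * m + 1), g ((k : ℤ) - m) = ∑ r ∈ Finset.Icc (-(m : ℤ)) m, g r := by
  refine Finset.sum_nbij' (fun k => (k : ℤ) - m)
    (fun r => ⟨min (r + m).toNat (2 * m), by omega⟩) ?_ ?_ ?_ ?_ ?_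
  · intro k _; rw [Finset.mem_Icc]; omega
  · intro r _; exact Finset.mem_univ _
  · intro k _; ext; simp only [sub_add_cancel, Int.toNat_natCast]; omega
  · intro r hr; rw [Finset.mem_Icc] at hr; simp only; omega
  · intro k _; rfl

theorem tsum_subtype_lt_abs_eq_tsum_sub_sum_Icc {E : Type*} [NormedAddCommGroup E] [CompleteSpace E]
    {g : ℤ → E} (hg : Summable g) (m : ℕ) :
    ∑' r : {r : ℤ // (m : ℤ) < |r|}, g r = ∑' r, g r - ∑ r ∈ Finset.Icc (-(m : ℤ)) m, g r := by
  have hcompl : ∀ r : ℤ, (m : ℤ) < |r| ↔ r ∉ Finset.Icc (-(m : ℤ)) m := by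
    intro r; simp only [Finset.mem_Icc, lt_abs]; omega
  calc ∑' r : {r : ℤ // (m : ℤ) < |r|}, g r
      = ∑' r : {r : ℤ // r ∉ Finset.Icc (-(m : ℤ)) m}, g r :=
        (Equiv.subtypeEquivRight hcompl).tsum_eq (g ∘ (↑))
    _ = _ := by
      rw [eq_sub_iff_add_eq, add_comm]
      exact hg.sum_add_tsum_subtype_compl _

theorem Matrix.IsHermitian.conjTranspose_sub_diagonal_mul_add_apply {n R : Type*} [Fintype n]
    [DecidableEq n] [CommRing R] [StarRing R] {A : Matrix n n R}
    (hA : A.IsHermitian) {d : n → R} (hd : ∀ k, star (d k) = -d k) (X : Matrix n n R) (i j : n) :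
    ((A - diagonal d)ᴴ * X + X * (A - diagonal d)) i j
      = (A * X + X * A) i j + (d i - d j) * X i j := by
  have hD : (A - diagonal d)ᴴ = A + diagonal d := by
    rw [conjTranspose_sub, hA.eq, diagonal_conjTranspose, show star d = -d from funext hd,
      show diagonal (-d) = -diagonal d from (diagonal_neg d).symm, sub_neg_eq_add]
  simp only [hD, add_mul, mul_sub, add_apply, sub_apply, diagonal_mul, mul_diagonal]
  ring

/-- The `m`-th truncated Toeplitz matrix of a symbol `a`; row and column `i : Fin (2 * m + 1)` stand
for the index `i - m ∈ {-m, …, m}`. -/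
def truncatedToeplitz {R : Type*} (a : ℤ → R) (m : ℕ) :
    Matrix (Fin (2 * m + 1)) (Fin (2 * m + 1)) R :=
  of fun i j => a (((i : ℤ) - m) - ((j : ℤ) - m))

theorem truncatedToeplitz_mul_apply {R : Type*} [NonUnitalNonAssocSemiring R] (a p : ℤ → R) (m : ℕ)
    (i j : Fin (2 * m + 1)) :
    (truncatedToeplitz a m * truncatedToeplitz p m) i j
      = ∑ r ∈ Finset.Icc (-(m : ℤ)) m, a (((i : ℤ) - m) - r) * p (r - ((j : ℤ) - m)) :=
  Fin.sum_centered_eq_sum_Icc m fun r => a (((i : ℤ) - m) - r) * p (r - ((j : ℤ) - m))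

theorem truncatedToeplitz_isHermitian {R : Type*} [Star R] {a : ℤ → R}
    (ha : ∀ k, star (a k) = a (-k)) (m : ℕ) : (truncatedToeplitz a m).IsHermitian := by
  ext i j
  simp only [truncatedToeplitz, conjTranspose_apply, of_apply, ha, neg_sub]

theorem neg_eq_tsum_add_of_lyapunov {R : Type*} [NormedCommRing R] [CompleteSpace R]
    {a p q : ℤ → R} (ha : Summable fun k => ‖a k‖ ^ 2) (hp : Summable fun k => ‖p k‖ ^ 2) (c : R)
    (hL : ∀ k : ℤ, 2 * (∑' r, a (k - r) * p r) + c * k * p k + q k = 0) (i j : ℤ) :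
    -q (i - j)
      = ∑' r, (a (i - r) * p (r - j) + p (i - r) * a (r - j)) + c * (i - j : ℤ) * p (i - j) := by
  rw [(summable_mul_comp_sub_of_summable_norm_sq ha hp i j).tsum_add
    (summable_mul_comp_sub_of_summable_norm_sq hp ha i j), tsum_mul_comp_sub, tsum_mul_comp_sub,
    tsum_comp_sub_mul_comm a p]
  linear_combination -hL (i - j)

/-- `N_m = diag(iωk)_{|k| ≤ m}`, indexed as in `truncatedToeplitz`. -/
def harmonicDiagonal (ω : ℝ) (m : ℕ) : Matrix (Fin (2 * m + 1)) (Fin (2 * m + 1)) ℂ :=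
  diagonal fun k => Complex.I * ω * ((k : ℤ) - m)

theorem truncatedToeplitz_lyapunov_apply {a : ℤ → ℂ} (ha : ∀ k, star (a k) = a (-k)) (ω : ℝ)
    (p : ℤ → ℂ) (m : ℕ) (i j : Fin (2 * m + 1)) :
    ((truncatedToeplitz a m - harmonicDiagonal ω m)ᴴ * truncatedToeplitz p m
        + truncatedToeplitz p m * (truncatedToeplitz a m - harmonicDiagonal ω m)) i j
      = ∑ r ∈ Finset.Icc (-(m : ℤ)) m,
          (a (((i : ℤ) - m) - r) * p (r - ((j : ℤ) - m))
            + p (((i : ℤ) - m) - r) * a (r - ((j : ℤ) - m)))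
        + Complex.I * ω * (((i : ℤ) - m) - ((j : ℤ) - m) : ℤ)
          * p (((i : ℤ) - m) - ((j : ℤ) - m)) := by
  rw [harmonicDiagonal,
    (truncatedToeplitz_isHermitian ha m).conjTranspose_sub_diagonal_mul_add_apply
      (fun k => by simp),
    Matrix.add_apply, truncatedToeplitz_mul_apply, truncatedToeplitz_mul_apply,
    ← Finset.sum_add_distrib]
  simp only [truncatedToeplitz, of_apply]
  push_cast
  ring

theorem truncated_lyapunov_correction_general
    (ω : ℝ)
    (a p q : ℤ → ℂ)
    (ha2 : Summable fun k => ‖a k‖ ^ 2) (hp2 : Summable fun k => ‖p k‖ ^ 2)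
    (hsym : ∀ k : ℤ, (starRingEnd ℂ) (a k) = a (-k))
    (hLyap : ∀ k : ℤ, 2 * (∑' r : ℤ, a (k - r) * p r)
      + Complex.I * ω * k * p k + q k = 0)
    (m : ℕ)
    (Am Nm Qm Pm P : Matrix (Fin (2 * m + 1)) (Fin (2 * m + 1)) ℂ)
    (hAm : ∀ i j, Am i j = a (((i : ℤ) - m) - ((j : ℤ) - m)))
    (hNm : ∀ i j, Nm i j = if i = j then Complex.I * ω * ((i : ℤ) - m) else 0)
    (hQm : ∀ i j, Qm i j = q (((i : ℤ) - m) - ((j : ℤ) - m)))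
    (hPm : ∀ i j, Pm i j = p (((i : ℤ) - m) - ((j : ℤ) - m)))
    (hP : (Am - Nm)ᴴ * P + P * (Am - Nm) + Qm = 0) :
    ∀ i j, ((Am - Nm)ᴴ * (P - Pm) + (P - Pm) * (Am - Nm)) i j
      = ∑' r : {r : ℤ // (m : ℤ) < |r|},
          (a (((i : ℤ) - m) - (r : ℤ)) * p ((r : ℤ) - ((j : ℤ) - m))
            + p (((i : ℤ) - m) - (r : ℤ)) * a ((r : ℤ) - ((j : ℤ) - m))) := by
  intro i j
  obtain rfl : Am = truncatedToeplitz a m := ext hAm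
  obtain rfl : Pm = truncatedToeplitz p m := ext hPm
  obtain rfl : Nm = harmonicDiagonal ω m :=
    ext fun k l => by rw [hNm, harmonicDiagonal, diagonal_apply]
  have hPij := congrFun (congrFun hP i) j
  have hsum := (summable_mul_comp_sub_of_summable_norm_sq ha2 hp2 ((i : ℤ) - m) ((j : ℤ) - m)).add
    (summable_mul_comp_sub_of_summable_norm_sq hp2 ha2 ((i : ℤ) - m) ((j : ℤ) - m))
  set M := truncatedToeplitz a m - harmonicDiagonal ω m
  calc _ = -Qm i j - (Mᴴ * truncatedToeplitz p m + truncatedToeplitz p m * M) i j := by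
        simp only [Matrix.mul_sub, Matrix.sub_mul, Matrix.add_apply, Matrix.sub_apply,
          Matrix.zero_apply] at hPij ⊢
        linear_combination hPij
    _ = _ := by
      rw [hQm, truncatedToeplitz_lyapunov_apply hsym, neg_eq_tsum_add_of_lyapunov ha2 hp2 _ hLyap,
        tsum_subtype_lt_abs_eq_tsum_sub_sum_Icc hsum]
      ring

/-- The solution `P_m` of the truncated harmonic Lyapunov equation differs from the `m`-truncation
`𝒫_m` of the Toeplitz solution by a correction `ΔP = P_m − 𝒫_m` whose Lyapunov image is given by
Hankel tail sums: for all `i, j`,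
`((A_m − N_m)^* ΔP + ΔP (A_m − N_m))_{ij} = Σ_{|r|>m} (a(i−r)p(r−j) + p(i−r)a(r−j))`. -/
theorem truncated_lyapunov_correction
    (T : ℝ) (hT : 0 < T) (ω : ℝ) (hω : ω = 2 * Real.pi / T)
    (a p q : ℤ → ℂ)
    (ha2 : Summable fun k => ‖a k‖ ^ 2) (hp2 : Summable fun k => ‖p k‖ ^ 2)
    (hsym : ∀ k : ℤ, (starRingEnd ℂ) (a k) = a (-k))
    (hLyap : ∀ k : ℤ, 2 * (∑' r : ℤ, a (k - r) * p r)
      + Complex.I * ω * k * p k + q k = 0)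
    (m : ℕ)
    (Am Nm Qm Pm P : Matrix (Fin (2 * m + 1)) (Fin (2 * m + 1)) ℂ)
    (hAm : ∀ i j, Am i j = a (((i : ℤ) - m) - ((j : ℤ) - m)))
    (hNm : ∀ i j, Nm i j = if i = j then Complex.I * ω * ((i : ℤ) - m) else 0)
    (hQm : ∀ i j, Qm i j = q (((i : ℤ) - m) - ((j : ℤ) - m)))
    (hPm : ∀ i j, Pm i j = p (((i : ℤ) - m) - ((j : ℤ) - m)))
    (hP : (Am - Nm)ᴴ * P + P * (Am - Nm) + Qm = 0) :
    ∀ i j, ((Am - Nm)ᴴ * (P - Pm) + (P - Pm) * (Am - Nm)) i j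
      = ∑' r : {r : ℤ // (m : ℤ) < |r|},
          (a (((i : ℤ) - m) - (r : ℤ)) * p ((r : ℤ) - ((j : ℤ) - m))
            + p (((i : ℤ) - m) - (r : ℤ)) * a ((r : ℤ) - ((j : ℤ) - m))) :=
  truncated_lyapunov_correction_general ω a p q ha2 hp2 hsym hLyap m Am Nm Qm Pm P hAm hNm hQm hPm
    hP
end
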